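/- arXiv:math/0511013 — 11 statements merged into one kernel-verified Lean document; each statement's English description precedes it below -/
import Mathlib

section
/- Let V be a finite-dimensional real vector space, π a skew bivector (π♯ : V* → V with β(π♯α) = -α(π♯β)), σ a skew 2-form (σ♭ : V → V* with (σ♭X)(Y) = -(σ♭Y)(X)), and A : V → V linear. Define Φ(X,α) = (AX + π♯α, σ♭X - α∘A) on V ⊕ V*. Then Φ² = εId (ε ∈ ℝ) if and only if: (i) A² = εId - π♯∘σ♭; (ii) π is compatible with A, i.e. (α∘A)(π♯β) = α(π♯(β∘A)) for all α,β ∈ V*; and (iii) σ is compatible with A, i.e. σ(AX,Y) = σ(X,AY) for all X,Y ∈ V. -/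
/-!
In block form `Φ = [[A, π♯], [σ♭, -A*]]`, so `Φ² = ε` splits into four block identities. The
off-diagonal blocks `A π♯ = π♯ A*` and `σ♭ A = A* σ♭` are the two compatibility conditions, and
since `π` and `σ` are skew the lower-right block `σ♭ π♯ + A*² = ε` is the transpose of the
upper-left one `A² + π♯ σ♭ = ε`, hence redundant.
-/

open Module

section

variable {R M : Type*} [CommRing R] [AddCommGroup M] [Module R M]
  {A : M →ₗ[R] M} {πs : Dual R M →ₗ[R] M} {σb : M →ₗ[R] Dual R M}

theorem dualMap_comp_eq_comp_iff :
    (∀ X, σb (A X) = A.dualMap (σb X)) ↔ ∀ X Y, σb (A X) Y = σb X (A Y) :=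
  forall_congr' fun _ ↦ LinearMap.ext_iff

theorem comp_eq_comp_dualMap_iff [Projective R M] :
    (∀ β, A (πs β) = πs (A.dualMap β)) ↔
      ∀ α β : Dual R M, A.dualMap α (πs β) = α (πs (A.dualMap β)) :=
  ⟨fun h α β ↦ congrArg α (h β), fun h β ↦ eval_apply_injective R (LinearMap.ext fun α ↦ h α β)⟩

theorem dualMap_sq_add_eq_smul (hπ : ∀ α β : Dual R M, β (πs α) = -α (πs β))
    (hσ : ∀ X Y : M, σb X Y = -σb Y X) {ε : R} (h : ∀ X, A (A X) + πs (σb X) = ε • X)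
    (α : Dual R M) : σb (πs α) + A.dualMap (A.dualMap α) = ε • α := by
  ext Y
  have hY := congrArg α (h Y)
  simp only [map_add, map_smul] at hY
  simp only [LinearMap.add_apply, LinearMap.smul_apply, LinearMap.dualMap_apply, hσ (πs α),
    hπ α (σb Y), neg_neg, ← hY]
  ring

variable {Φ : M × Dual R M →ₗ[R] M × Dual R M}

theorem apply_apply_of_blocks (hΦ : ∀ X α, Φ (X, α) = (A X + πs α, σb X - A.dualMap α))
    (X : M) (α : Dual R M) :
    Φ (Φ (X, α)) = (A (A X) + πs (σb X) + (A (πs α) - πs (A.dualMap α)),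
      σb (A X) - A.dualMap (σb X) + (σb (πs α) + A.dualMap (A.dualMap α))) := by
  simp only [hΦ, map_add, map_sub, Prod.mk.injEq]
  constructor <;> abel

theorem forall_apply_apply_eq_smul_iff
    (hΦ : ∀ X α, Φ (X, α) = (A X + πs α, σb X - A.dualMap α)) (ε : R) :
    (∀ u, Φ (Φ u) = ε • u) ↔
      (∀ X, A (A X) + πs (σb X) = ε • X) ∧ (∀ β, A (πs β) = πs (A.dualMap β)) ∧
      (∀ X, σb (A X) = A.dualMap (σb X)) ∧
      ∀ α, σb (πs α) + A.dualMap (A.dualMap α) = ε • α := by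
  simp only [Prod.forall, apply_apply_of_blocks hΦ, Prod.smul_mk, Prod.mk.injEq]
  constructor
  · intro h
    refine ⟨fun X ↦ ?_, fun β ↦ ?_, fun X ↦ ?_, fun α ↦ ?_⟩
    · simpa using (h X 0).1
    · simpa [sub_eq_zero] using (h 0 β).1
    · simpa [sub_eq_zero] using (h X 0).2
    · simpa using (h 0 α).2
  · rintro ⟨h₁, h₂, h₃, h₄⟩ X α
    simp [h₁, h₂, h₃, h₄]

end

theorem stmt_2_general (V : Type*) [AddCommGroup V] [Module ℝ V]
    (A : V →ₗ[ℝ] V) (πs : Dual ℝ V →ₗ[ℝ] V) (σb : V →ₗ[ℝ] Dual ℝ V)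
    (hπ : ∀ α β : Dual ℝ V, β (πs α) = -α (πs β))
    (hσ : ∀ X Y : V, σb X Y = -σb Y X)
    (ε : ℝ)
    (Φ : (V × Dual ℝ V) →ₗ[ℝ] (V × Dual ℝ V))
    (hΦ : ∀ (X : V) (α : Dual ℝ V),
      Φ (X, α) = (A X + πs α, σb X - A.dualMap α)) :
    (∀ u, Φ (Φ u) = ε • u) ↔
      ((∀ X : V, A (A X) = ε • X - πs (σb X)) ∧
       (∀ α β : Dual ℝ V, (A.dualMap α) (πs β) = α (πs (A.dualMap β))) ∧
       (∀ X Y : V, σb (A X) Y = σb X (A Y))) := by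
  simp only [forall_apply_apply_eq_smul_iff hΦ, comp_eq_comp_dualMap_iff,
    dualMap_comp_eq_comp_iff, eq_sub_iff_add_eq]
  exact ⟨fun ⟨h₁, h₂, h₃, _⟩ ↦ ⟨h₁, h₂, h₃⟩,
    fun ⟨h₁, h₂, h₃⟩ ↦ ⟨h₁, h₂, h₃, dualMap_sq_add_eq_smul hπ hσ h₁⟩⟩

/-- For `Φ(X,α) = (AX + π♯α, σ♭X - α∘A)` with `π`, `σ` skew, the condition
`Φ² = ε Id` is equivalent to `A² = εId - π♯∘σ♭` together with the
compatibility of `π` and `σ` with `A`. -/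
theorem stmt_2 (V : Type*) [AddCommGroup V] [Module ℝ V] [FiniteDimensional ℝ V]
    (A : V →ₗ[ℝ] V) (πs : Dual ℝ V →ₗ[ℝ] V) (σb : V →ₗ[ℝ] Dual ℝ V)
    (hπ : ∀ α β : Dual ℝ V, β (πs α) = -α (πs β))
    (hσ : ∀ X Y : V, σb X Y = -σb Y X)
    (ε : ℝ)
    (Φ : (V × Dual ℝ V) →ₗ[ℝ] (V × Dual ℝ V))
    (hΦ : ∀ (X : V) (α : Dual ℝ V),
      Φ (X, α) = (A X + πs α, σb X - A.dualMap α)) :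
    (∀ u, Φ (Φ u) = ε • u) ↔
      ((∀ X : V, A (A X) = ε • X - πs (σb X)) ∧
       (∀ α β : Dual ℝ V, (A.dualMap α) (πs β) = α (πs (A.dualMap β))) ∧
       (∀ X Y : V, σb (A X) Y = σb X (A Y))) :=
  stmt_2_general V A πs σb hπ hσ ε Φ hΦ
end

section
/- Let V be a finite-dimensional real vector space with a generalized almost complex structure, i.e. a g-skew-symmetric linear map Φ : V ⊕ V* → V ⊕ V* with Φ² = -Id, where g is the canonical neutral pairing. Then the dimension of V is even. -/
/-! Write `Φ (X, 0) = (A X, σ♭ X)`. The `g`-skew-symmetry of `Φ` makes `σ♭` a skew form on `V`,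
and `Φ² = -1` shows that `A` preserves `ker σ♭` and squares to `-1` there, so `ker σ♭` is a
complex vector space. On a complement of `ker σ♭`, of dimension `dim (im σ♭)`, the form `σ` is
nondegenerate and skew, and a skew matrix of odd size has `det M = -det M = 0`. Both dimensions
are therefore even, and they add up to `dim V`. -/

open Module

/-- The canonical neutral pairing on `V ⊕ V*`. -/
noncomputable def bigPairing (V : Type*) [AddCommGroup V] [Module ℝ V]
    (u v : V × Module.Dual ℝ V) : ℝ :=
  (u.2 v.1 + v.2 u.1) / 2

open LinearMap

namespace LinearMap.BilinForm

variable {K V : Type*} [Field K] [AddCommGroup V] [Module K V]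

theorem isRefl_of_skew {B : LinearMap.BilinForm K V} (hB : ∀ x y, B x y = -B y x) : B.IsRefl :=
  fun x y h => by rw [hB, h, neg_zero]

theorem nondegenerate_restrict_of_isCompl_ker {B : LinearMap.BilinForm K V}
    (hB : ∀ x y, B x y = -B y x) {W : Submodule K V} (hW : IsCompl W (ker B)) :
    (B.restrict W).Nondegenerate := by
  have hWker : ∀ x ∈ W, ∀ y ∈ ker B, B x y = 0 := fun x _ y hy => by
    rw [hB, LinearMap.mem_ker.mp hy, LinearMap.zero_apply, neg_zero]
  have hrefl : (B.restrict W).IsRefl := isRefl_of_skew fun x y => hB x y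
  refine hrefl.nondegenerate_iff_separatingLeft.mpr ?_
  rw [separatingLeft_iff_ker_eq_bot, ker_restrict_eq_of_codisjoint hW.codisjoint hWker,
    ← Submodule.disjoint_iff_comap_eq_bot]
  exact hW.disjoint

variable [FiniteDimensional K V]

theorem even_finrank_of_nondegenerate_of_skew (hK : ringChar K ≠ 2)
    {B : LinearMap.BilinForm K V} (hB : ∀ x y, B x y = -B y x) (hnd : B.Nondegenerate) :
    Even (finrank K V) := by
  let b := finBasis K V
  let M := toMatrix b B
  have hdet : M.det ≠ 0 := (nondegenerate_iff_det_ne_zero b).mp hnd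
  have hMt : M.transpose = -M := by
    ext i j
    simp only [M, Matrix.transpose_apply, Matrix.neg_apply, toMatrix_apply, hB (b j)]
  have hsign : (-1 : K) ^ finrank K V * M.det = 1 * M.det := by
    calc (-1 : K) ^ finrank K V * M.det = (-M).det := by rw [Matrix.det_neg, Fintype.card_fin]
      _ = 1 * M.det := by rw [← hMt, Matrix.det_transpose, one_mul]
  exact (neg_one_pow_eq_one_iff_even (Ring.neg_one_ne_one_of_char_ne_two hK)).mp
    (mul_right_cancel₀ hdet hsign)

theorem even_finrank_range_of_skew (hK : ringChar K ≠ 2) {B : LinearMap.BilinForm K V}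
    (hB : ∀ x y, B x y = -B y x) : Even (finrank K (range B)) := by
  obtain ⟨W, hW⟩ := Submodule.exists_isCompl (ker B)
  have hrange : finrank K (range B) = finrank K W := by
    have := B.finrank_range_add_finrank_ker
    have := Submodule.finrank_add_eq_of_isCompl hW
    omega
  rw [hrange]
  exact even_finrank_of_nondegenerate_of_skew hK (fun x y => hB x y)
    (nondegenerate_restrict_of_isCompl_ker hB hW.symm)

end LinearMap.BilinForm

theorem Module.End.even_finrank_of_mul_self_eq_neg_one {W : Type*} [AddCommGroup W]
    [Module ℝ W] {J : Module.End ℝ W} (hJ : J * J = -1) : Even (finrank ℝ W) := by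
  let φ : ℂ →ₐ[ℝ] Module.End ℝ W := Complex.liftAux J hJ
  let _ : Module ℂ W := Module.compHom W φ.toRingHom
  have : IsScalarTower ℝ ℂ W := ⟨fun r z w => by
    change φ (r • z) w = r • φ z w
    rw [map_smul]
    rfl⟩
  have h := Module.finrank_mul_finrank ℝ ℂ W
  rw [Complex.finrank_real_complex] at h
  exact ⟨finrank ℂ W, by omega⟩

namespace GeneralizedAlmostComplex

variable {V : Type*} [AddCommGroup V] [Module ℝ V] (Φ : (V × Dual ℝ V) →ₗ[ℝ] (V × Dual ℝ V))

/-- `endoBlock Φ` and `formBlock Φ` are the blocks `A` and `σ♭` of `Φ`. -/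
def endoBlock : Module.End ℝ V := fst ℝ V (Dual ℝ V) ∘ₗ Φ ∘ₗ inl ℝ V (Dual ℝ V)

def formBlock : LinearMap.BilinForm ℝ V := snd ℝ V (Dual ℝ V) ∘ₗ Φ ∘ₗ inl ℝ V (Dual ℝ V)

theorem apply_inl (X : V) : Φ (X, 0) = (endoBlock Φ X, formBlock Φ X) := rfl

theorem formBlock_skew (hskew : ∀ u v, bigPairing V u (Φ v) + bigPairing V (Φ u) v = 0)
    (X Y : V) : formBlock Φ X Y = -formBlock Φ Y X := by
  have h := hskew (X, 0) (Y, 0)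
  simp only [bigPairing, apply_inl, LinearMap.zero_apply] at h
  linarith

theorem apply_apply_inl_of_mem_ker (hsq : ∀ u, Φ (Φ u) = -u) {X : V}
    (hX : X ∈ ker (formBlock Φ)) :
    (endoBlock Φ (endoBlock Φ X), formBlock Φ (endoBlock Φ X)) = (-X, 0) := by
  have h := hsq (X, 0)
  rwa [apply_inl, LinearMap.mem_ker.mp hX, apply_inl, Prod.neg_mk, neg_zero] at h

theorem even_finrank_ker_formBlock (hsq : ∀ u, Φ (Φ u) = -u) :
    Even (finrank ℝ (ker (formBlock Φ))) := by
  have hmaps : ∀ X ∈ ker (formBlock Φ), endoBlock Φ X ∈ ker (formBlock Φ) :=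
    fun X hX => congrArg Prod.snd (apply_apply_inl_of_mem_ker Φ hsq hX)
  refine Module.End.even_finrank_of_mul_self_eq_neg_one (J := (endoBlock Φ).restrict hmaps) ?_
  ext ⟨X, hX⟩
  exact congrArg Prod.fst (apply_apply_inl_of_mem_ker Φ hsq hX)

end GeneralizedAlmostComplex

/-- If `V` carries a generalized almost complex structure, i.e. a
`g`-skew-symmetric `Φ : V ⊕ V* → V ⊕ V*` with `Φ² = -Id`, then `dim V` is even. -/
theorem stmt_3 (V : Type*) [AddCommGroup V] [Module ℝ V] [FiniteDimensional ℝ V]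
    (Φ : (V × Dual ℝ V) →ₗ[ℝ] (V × Dual ℝ V))
    (hskew : ∀ u v, bigPairing V u (Φ v) + bigPairing V (Φ u) v = 0)
    (hsq : ∀ u, Φ (Φ u) = -u) :
    Even (finrank ℝ V) := by
  have hchar : ringChar ℝ ≠ 2 := by rw [ringChar.eq_zero]; norm_num
  have hrange := LinearMap.BilinForm.even_finrank_range_of_skew hchar
    (GeneralizedAlmostComplex.formBlock_skew Φ hskew)
  have hker := GeneralizedAlmostComplex.even_finrank_ker_formBlock Φ hsq
  rw [← (GeneralizedAlmostComplex.formBlock Φ).finrank_range_add_finrank_ker]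
  exact hrange.add hker
end

section
/- Let V be a finite-dimensional real vector space and Φ a g-skew-symmetric endomorphism of V ⊕ V* with Φ² = 0 and im Φ = ker Φ (generalized tangent structure). Then dim V is even. (Sketch: for any complement D of im Φ that is maximally g-isotropic, the 2-form ϖ(Z₁,Z₂) = g(ΦZ₁,Z₂) on D is nondegenerate and skew, so dim D = dim V is even.) -/
open Module

/-!
The form `ω(u, v) = g(Φ u, v)` is alternating because `Φ` is `g`-skew, and its radical is
`ker Φ` because `g` is nondegenerate. An alternating form is nondegenerate on any complement of
its radical, and a nondegenerate alternating form lives in even dimension (its Gram matrix `M`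
satisfies `det M = det Mᵀ = (-1)ⁿ det M`). Hence `rank Φ` is even, and `im Φ = ker Φ` forces
`rank Φ = dim (V ⊕ V*) / 2 = dim V`.
-/

namespace LinearMap.BilinForm

theorem nondegenerate_restrict_of_isCompl_ker_s7 {R M : Type*} [CommRing R] [AddCommGroup M]
    [Module R M] {B : LinearMap.BilinForm R M} (hB : B.IsRefl) {D : Submodule R M}
    (hD : IsCompl (LinearMap.ker B) D) : (B.restrict D).Nondegenerate := by
  refine B.nondegenerate_restrict_of_disjoint_orthogonal hB ?_
  rw [Submodule.disjoint_def]
  intro x hxD hxorth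
  have hBx : B x = 0 := by
    ext v
    obtain ⟨k, hk, d, hd, rfl⟩ :=
      Submodule.mem_sup.mp (hD.sup_eq_top ▸ Submodule.mem_top : v ∈ _)
    have hkx : B k x = 0 := by rw [LinearMap.mem_ker.mp hk, LinearMap.zero_apply]
    simp [hB _ _ hkx, hB _ _ (hxorth d hd)]
  exact (Submodule.disjoint_def.mp hD.disjoint) x hBx hxD

variable {K W : Type*} [Field K] [NeZero (2 : K)] [AddCommGroup W] [Module K W]
  [FiniteDimensional K W]

theorem even_finrank_of_isAlt_of_nondegenerate {B : LinearMap.BilinForm K W} (hB : B.IsAlt)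
    (hnd : B.Nondegenerate) : Even (finrank K W) := by
  let b := finBasis K W
  set M := toMatrix b B
  have hMt : M.transpose = -M := by
    ext i j
    simpa only [M, Matrix.transpose_apply, Matrix.neg_apply, toMatrix_apply] using
      (LinearMap.IsAlt.neg hB (b i) (b j)).symm
  have hdet : M.det ≠ 0 := (nondegenerate_iff_det_ne_zero b).mp hnd
  by_contra hodd
  have hneg : M.det = -M.det := by
    calc M.det = M.transpose.det := M.det_transpose.symm
      _ = -M.det := by
        rw [hMt, Matrix.det_neg, Fintype.card_fin, (Nat.not_even_iff_odd.mp hodd).neg_one_pow,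
          neg_one_mul]
  exact hdet (mul_left_cancel₀ two_ne_zero (by linear_combination hneg) : M.det = 0)

theorem even_finrank_range_of_isAlt {B : LinearMap.BilinForm K W} (hB : B.IsAlt) :
    Even (finrank K (LinearMap.range B)) := by
  obtain ⟨D, hD⟩ := (LinearMap.ker B).exists_isCompl
  have hDrange : finrank K D = finrank K (LinearMap.range B) := by
    have := B.finrank_range_add_finrank_ker
    have := Submodule.finrank_add_eq_of_isCompl hD
    omega
  rw [← hDrange]
  exact even_finrank_of_isAlt_of_nondegenerate (fun x ↦ hB x)
    (nondegenerate_restrict_of_isCompl_ker_s7 hB.isRefl hD)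

theorem even_finrank_range_of_isSkew {g : LinearMap.BilinForm K W} (hg : g.IsSymm)
    (hnd : g.SeparatingLeft) {Φ : W →ₗ[K] W} (hΦ : ∀ u v, g u (Φ v) + g (Φ u) v = 0) :
    Even (finrank K (LinearMap.range Φ)) := by
  have hω : (g ∘ₗ Φ).IsAlt := fun u ↦ by
    have h := hΦ u u
    rw [← hg.eq (Φ u) u] at h
    exact mul_left_cancel₀ two_ne_zero (by linear_combination h)
  have hinj : Function.Injective g :=
    LinearMap.ker_eq_bot.mp (LinearMap.separatingLeft_iff_ker_eq_bot.mp hnd)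
  have hrange : finrank K (LinearMap.range (g ∘ₗ Φ)) = finrank K (LinearMap.range Φ) := by
    rw [LinearMap.range_comp]
    exact (Submodule.equivMapOfInjective g hinj _).finrank_eq.symm
  rw [← hrange]
  exact even_finrank_range_of_isAlt hω

end LinearMap.BilinForm

section bigPairing

variable (V : Type*) [AddCommGroup V] [Module ℝ V]

noncomputable def bigPairingForm : LinearMap.BilinForm ℝ (V × Dual ℝ V) :=
  LinearMap.mk₂ ℝ (bigPairing V)
    (fun u v w ↦ by simp only [bigPairing, Prod.fst_add, Prod.snd_add, map_add,
      LinearMap.add_apply]; ring)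
    (fun c u v ↦ by simp only [bigPairing, Prod.smul_fst, Prod.smul_snd, map_smul,
      LinearMap.smul_apply, smul_eq_mul]; ring)
    (fun u v w ↦ by simp only [bigPairing, Prod.fst_add, Prod.snd_add, map_add,
      LinearMap.add_apply]; ring)
    (fun c u v ↦ by simp only [bigPairing, Prod.smul_fst, Prod.smul_snd, map_smul,
      LinearMap.smul_apply, smul_eq_mul]; ring)

theorem bigPairingForm_apply (u v : V × Dual ℝ V) : bigPairingForm V u v = bigPairing V u v :=
  rfl

theorem isSymm_bigPairingForm : (bigPairingForm V).IsSymm :=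
  ⟨fun u v ↦ by simp only [bigPairingForm_apply, bigPairing, add_comm]⟩

theorem separatingLeft_bigPairingForm : (bigPairingForm V).SeparatingLeft := by
  intro u hu
  have hdual : u.2 = 0 := by
    ext x
    simpa [bigPairingForm_apply, bigPairing] using hu (x, 0)
  have hvec : u.1 = 0 := by
    rw [← Module.forall_dual_apply_eq_zero_iff ℝ u.1]
    intro φ
    simpa [bigPairingForm_apply, bigPairing] using hu (0, φ)
  exact Prod.ext hvec hdual

end bigPairing

theorem stmt_7_general (V : Type*) [AddCommGroup V] [Module ℝ V] [FiniteDimensional ℝ V]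
    (Φ : (V × Dual ℝ V) →ₗ[ℝ] (V × Dual ℝ V))
    (hskew : ∀ u v, bigPairing V u (Φ v) + bigPairing V (Φ u) v = 0)
    (hrk : LinearMap.range Φ = LinearMap.ker Φ) :
    Even (finrank ℝ V) := by
  have heven := LinearMap.BilinForm.even_finrank_range_of_isSkew (isSymm_bigPairingForm V)
    (separatingLeft_bigPairingForm V) hskew
  have hdim := Φ.finrank_range_add_finrank_ker
  rw [← hrk, finrank_prod, Subspace.dual_finrank_eq] at hdim
  have hrank : finrank ℝ (LinearMap.range Φ) = finrank ℝ V := by omega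
  rwa [hrank] at heven

/-- For a generalized tangent structure `Φ` (`g`-skew, `Φ² = 0`,
`im Φ = ker Φ`), the dimension of `V` is even. -/
theorem stmt_7 (V : Type*) [AddCommGroup V] [Module ℝ V] [FiniteDimensional ℝ V]
    (Φ : (V × Dual ℝ V) →ₗ[ℝ] (V × Dual ℝ V))
    (hskew : ∀ u v, bigPairing V u (Φ v) + bigPairing V (Φ u) v = 0)
    (hsq : ∀ u, Φ (Φ u) = 0)
    (hrk : LinearMap.range Φ = LinearMap.ker Φ) :
    Even (finrank ℝ V) :=
  stmt_7_general V Φ hskew hrk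
end

section
/- Let V be a finite-dimensional real vector space, Φ a g-skew-symmetric endomorphism of V ⊕ V* with components (A, π, σ) (i.e. Φ(X,α) = (AX + π♯α, σ♭X - α∘A)), and B a skew 2-form with gauge transformation 𝓑(X,α) = (X, α + B♭X). Then 𝓑⁻¹ ∘ Φ ∘ 𝓑 is again g-skew-symmetric with components A' = A + π♯∘B♭, the same bivector π, and the 2-form σ' given by σ'(X,Y) = σ(X,Y) + π(B♭X, B♭Y) - B(AX,Y) - B(X,AY). -/
/-!
Every endomorphism of `V ⊕ V*` of the shape `(X, α) ↦ (A X + π♯ α, σ♭ X - α ∘ A)` is skew for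
the pairing as soon as `π` and `σ` are skew. Conjugating such a map by the gauge transformation
of `B` gives again a map of this shape, with components `A + π♯ ∘ B♭`, `π` and a 2-form `σ'`
whose skewness follows from that of `σ`, `π` and `B`.
-/

open Module

namespace GeneralizedEndomorphism

variable {R V : Type*} [CommRing R] [AddCommGroup V] [Module R V]

def ofComponents (A : V →ₗ[R] V) (π : Dual R V →ₗ[R] V) (σ : V →ₗ[R] Dual R V) :
    (V × Dual R V) →ₗ[R] (V × Dual R V) :=
  (A ∘ₗ LinearMap.fst R V (Dual R V) + π ∘ₗ LinearMap.snd R V (Dual R V)).prod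
    (σ ∘ₗ LinearMap.fst R V (Dual R V) - A.dualMap ∘ₗ LinearMap.snd R V (Dual R V))

@[simp]
theorem ofComponents_apply (A : V →ₗ[R] V) (π : Dual R V →ₗ[R] V) (σ : V →ₗ[R] Dual R V)
    (X : V) (α : Dual R V) :
    ofComponents A π σ (X, α) = (A X + π α, σ X - A.dualMap α) :=
  rfl

def gauge (B : V →ₗ[R] Dual R V) : (V × Dual R V) →ₗ[R] (V × Dual R V) :=
  (LinearMap.fst R V (Dual R V)).prod
    (LinearMap.snd R V (Dual R V) + B ∘ₗ LinearMap.fst R V (Dual R V))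

@[simp]
theorem gauge_apply (B : V →ₗ[R] Dual R V) (X : V) (α : Dual R V) :
    gauge B (X, α) = (X, α + B X) :=
  rfl

/-- The paper's `σ'`, using `B (π♯ (B♭ X), Y) = -π(B♭X, B♭Y)`. -/
def gaugeForm (A : V →ₗ[R] V) (π : Dual R V →ₗ[R] V) (σ B : V →ₗ[R] Dual R V) :
    V →ₗ[R] Dual R V :=
  σ - B ∘ₗ π ∘ₗ B - B ∘ₗ A - A.dualMap ∘ₗ B

theorem gauge_neg_comp_ofComponents_comp_gauge (A : V →ₗ[R] V) (π : Dual R V →ₗ[R] V)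
    (σ B : V →ₗ[R] Dual R V) (hπ : ∀ α β : Dual R V, β (π α) = -α (π β))
    (hB : ∀ X Y : V, B X Y = -B Y X) :
    gauge (-B) ∘ₗ ofComponents A π σ ∘ₗ gauge B
      = ofComponents (A + π ∘ₗ B) π (gaugeForm A π σ B) := by
  refine LinearMap.ext fun ⟨X, α⟩ => Prod.ext ?_ (LinearMap.ext fun Y => ?_)
  · simp only [LinearMap.comp_apply, gauge_apply, ofComponents_apply, map_add,
      LinearMap.add_apply]
    abel
  have hBπ : B (π α) Y = α (π (B Y)) := by rw [hB, hπ, neg_neg]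
  simp only [LinearMap.comp_apply, gauge_apply, ofComponents_apply, gaugeForm, map_add,
    LinearMap.add_apply, LinearMap.sub_apply, LinearMap.neg_apply,
    LinearMap.dualMap_apply, hBπ]
  ring

theorem gaugeForm_skew (A : V →ₗ[R] V) (π : Dual R V →ₗ[R] V) (σ B : V →ₗ[R] Dual R V)
    (hπ : ∀ α β : Dual R V, β (π α) = -α (π β)) (hσ : ∀ X Y : V, σ X Y = -σ Y X)
    (hB : ∀ X Y : V, B X Y = -B Y X) (X Y : V) :
    gaugeForm A π σ B X Y = -gaugeForm A π σ B Y X := by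
  have hBπB : B (π (B X)) Y = -B (π (B Y)) X := by
    rw [hB (π (B X)), hπ (B X) (B Y), hB (π (B Y))]
  simp only [gaugeForm, LinearMap.sub_apply, LinearMap.comp_apply, LinearMap.dualMap_apply,
    hσ X Y, hBπB, hB (A X) Y, hB (A Y) X]
  ring

end GeneralizedEndomorphism

open GeneralizedEndomorphism

theorem bigPairing_ofComponents_skew {V : Type*} [AddCommGroup V] [Module ℝ V]
    (A : V →ₗ[ℝ] V) (π : Dual ℝ V →ₗ[ℝ] V) (σ : V →ₗ[ℝ] Dual ℝ V)
    (hπ : ∀ α β : Dual ℝ V, β (π α) = -α (π β)) (hσ : ∀ X Y : V, σ X Y = -σ Y X)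
    (u v : V × Dual ℝ V) :
    bigPairing V u (ofComponents A π σ v) + bigPairing V (ofComponents A π σ u) v = 0 := by
  obtain ⟨X, α⟩ := u
  obtain ⟨Y, β⟩ := v
  simp only [bigPairing, ofComponents_apply, map_add, LinearMap.sub_apply,
    LinearMap.dualMap_apply, hπ α β, hσ X Y]
  ring

theorem stmt_9_general (V : Type*) [AddCommGroup V] [Module ℝ V]
    (A : V →ₗ[ℝ] V) (πs : Dual ℝ V →ₗ[ℝ] V) (σb : V →ₗ[ℝ] Dual ℝ V)
    (hπ : ∀ α β : Dual ℝ V, β (πs α) = -α (πs β))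
    (hσ : ∀ X Y : V, σb X Y = -σb Y X)
    (Φ : (V × Dual ℝ V) →ₗ[ℝ] (V × Dual ℝ V))
    (hΦ : ∀ (X : V) (α : Dual ℝ V),
      Φ (X, α) = (A X + πs α, σb X - A.dualMap α))
    (Bb : V →ₗ[ℝ] Dual ℝ V)
    (hB : ∀ X Y : V, Bb X Y = -Bb Y X)
    (G Ginv : (V × Dual ℝ V) →ₗ[ℝ] (V × Dual ℝ V))
    (hG : ∀ (X : V) (α : Dual ℝ V), G (X, α) = (X, α + Bb X))
    (hGinv : ∀ (X : V) (α : Dual ℝ V), Ginv (X, α) = (X, α - Bb X)) :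
    (∀ u v, bigPairing V u ((Ginv ∘ₗ Φ ∘ₗ G) v)
        + bigPairing V ((Ginv ∘ₗ Φ ∘ₗ G) u) v = 0) ∧
    (∀ (X : V) (α : Dual ℝ V),
      ((Ginv ∘ₗ Φ ∘ₗ G) (X, α)).1 = A X + πs (Bb X) + πs α ∧
      ∀ Y : V, ((Ginv ∘ₗ Φ ∘ₗ G) (X, α)).2 Y =
        (σb X Y + Bb Y (πs (Bb X)) - Bb (A X) Y - Bb X (A Y))
          - α (A Y + πs (Bb Y))) := by
  have hΦ' : Φ = ofComponents A πs σb := LinearMap.ext fun ⟨X, α⟩ => hΦ X α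
  have hG' : G = gauge Bb := LinearMap.ext fun ⟨X, α⟩ => hG X α
  have hGinv' : Ginv = gauge (-Bb) :=
    LinearMap.ext fun ⟨X, α⟩ => (hGinv X α).trans (by simp [sub_eq_add_neg])
  rw [hΦ', hG', hGinv', gauge_neg_comp_ofComponents_comp_gauge A πs σb Bb hπ hB]
  refine ⟨bigPairing_ofComponents_skew _ _ _ hπ (gaugeForm_skew A πs σb Bb hπ hσ hB),
    fun X α => ⟨rfl, fun Y => ?_⟩⟩
  simp only [ofComponents_apply, gaugeForm, LinearMap.sub_apply, LinearMap.comp_apply,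
    LinearMap.dualMap_apply, LinearMap.add_apply, hB (πs (Bb X)) Y]
  ring

/-- The gauge transform `𝓑⁻¹ ∘ Φ ∘ 𝓑` of a `g`-skew endomorphism `Φ` with
components `(A,π,σ)` by a skew 2-form `B` is again `g`-skew, with components
`A' = A + π♯∘B♭`, the same `π`, and
`σ'(X,Y) = σ(X,Y) + π(B♭X,B♭Y) - B(AX,Y) - B(X,AY)`. -/
theorem stmt_9 (V : Type*) [AddCommGroup V] [Module ℝ V] [FiniteDimensional ℝ V]
    (A : V →ₗ[ℝ] V) (πs : Dual ℝ V →ₗ[ℝ] V) (σb : V →ₗ[ℝ] Dual ℝ V)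
    (hπ : ∀ α β : Dual ℝ V, β (πs α) = -α (πs β))
    (hσ : ∀ X Y : V, σb X Y = -σb Y X)
    (Φ : (V × Dual ℝ V) →ₗ[ℝ] (V × Dual ℝ V))
    (hΦ : ∀ (X : V) (α : Dual ℝ V),
      Φ (X, α) = (A X + πs α, σb X - A.dualMap α))
    (Bb : V →ₗ[ℝ] Dual ℝ V)
    (hB : ∀ X Y : V, Bb X Y = -Bb Y X)
    (G Ginv : (V × Dual ℝ V) →ₗ[ℝ] (V × Dual ℝ V))
    (hG : ∀ (X : V) (α : Dual ℝ V), G (X, α) = (X, α + Bb X))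
    (hGinv : ∀ (X : V) (α : Dual ℝ V), Ginv (X, α) = (X, α - Bb X)) :
    (∀ u v, bigPairing V u ((Ginv ∘ₗ Φ ∘ₗ G) v)
        + bigPairing V ((Ginv ∘ₗ Φ ∘ₗ G) u) v = 0) ∧
    (∀ (X : V) (α : Dual ℝ V),
      ((Ginv ∘ₗ Φ ∘ₗ G) (X, α)).1 = A X + πs (Bb X) + πs α ∧
      ∀ Y : V, ((Ginv ∘ₗ Φ ∘ₗ G) (X, α)).2 Y =
        (σb X Y + Bb Y (πs (Bb X)) - Bb (A X) Y - Bb X (A Y))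
          - α (A Y + πs (Bb Y))) :=
  stmt_9_general V A πs σb hπ hσ Φ hΦ Bb hB G Ginv hG hGinv
end

section
/- Let V be a finite-dimensional real vector space with a nondegenerate skew 2-form ϖ (ϖ♭ : V → V* an isomorphism), define π♯ = -(ϖ♭)⁻¹, and let A : V → V satisfy ϖ(AX,Y) = ϖ(X,AY). Fix ε ∈ {-1,0,1} and define Φ(X,α) = (AX + π♯α, (ϖ_{A²})♭X - ε ϖ♭X - α∘A), where ϖ_{A²}(X,Y) = ϖ(A²X,Y). Then Φ is g-skew-symmetric and Φ² = εId. -/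
open Module

/-!
Compatibility of `A` with `ϖ` says `ϖ♭ ∘ A = A* ∘ ϖ♭`, equivalently `π♯ ∘ A* = A ∘ π♯`. With these
two intertwining relations the `A`- and `A²`-terms of `Φ²` cancel in pairs and only `ε • id`
survives. Skew-symmetry of `Φ` for the neutral pairing reduces to the skew-symmetry of `ϖ`, of
`π` and of `ϖ_{A²}`, the last again by compatibility.
-/

namespace HitchinPair

variable {R V : Type*} [CommRing R] [AddCommGroup V] [Module R V]
  (ϖb : V ≃ₗ[R] Dual R V) (A : V →ₗ[R] V) (ε : R)

/-- The map `Φ` of the paper, written with `π♯ = -ϖb.symm`. -/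
def endo : (V × Dual R V) →ₗ[R] (V × Dual R V) :=
  LinearMap.prod (A ∘ₗ LinearMap.fst R V _ - ϖb.symm.toLinearMap ∘ₗ LinearMap.snd R V _)
    ((ϖb.toLinearMap ∘ₗ A ∘ₗ A - ε • ϖb.toLinearMap) ∘ₗ LinearMap.fst R V _ -
      A.dualMap ∘ₗ LinearMap.snd R V _)

@[simp]
theorem endo_apply (X : V) (α : Dual R V) :
    endo ϖb A ε (X, α) = (A X - ϖb.symm α, ϖb (A (A X)) - ε • ϖb X - A.dualMap α) :=
  rfl

variable {ϖb A ε}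

theorem flat_apply_eq_dualMap (hA : ∀ X Y : V, ϖb (A X) Y = ϖb X (A Y)) (X : V) :
    ϖb (A X) = A.dualMap (ϖb X) :=
  LinearMap.ext (hA X)

theorem symm_dualMap_eq (hA : ∀ X Y : V, ϖb (A X) Y = ϖb X (A Y)) (α : Dual R V) :
    ϖb.symm (A.dualMap α) = A (ϖb.symm α) := by
  rw [LinearEquiv.symm_apply_eq, flat_apply_eq_dualMap hA, LinearEquiv.apply_symm_apply]

theorem apply_symm_eq_neg (hϖ : ∀ X Y : V, ϖb X Y = -ϖb Y X) (α β : Dual R V) :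
    α (ϖb.symm β) = -β (ϖb.symm α) := by
  simpa using hϖ (ϖb.symm α) (ϖb.symm β)

theorem flat_sq_skew (hϖ : ∀ X Y : V, ϖb X Y = -ϖb Y X)
    (hA : ∀ X Y : V, ϖb (A X) Y = ϖb X (A Y)) (X Y : V) :
    ϖb (A (A X)) Y = -ϖb (A (A Y)) X := by
  rw [hA, hA, hϖ]

theorem endo_skew (hϖ : ∀ X Y : V, ϖb X Y = -ϖb Y X)
    (hA : ∀ X Y : V, ϖb (A X) Y = ϖb X (A Y)) (u v : V × Dual R V) :
    u.2 (endo ϖb A ε v).1 + (endo ϖb A ε v).2 u.1 +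
      ((endo ϖb A ε u).2 v.1 + v.2 (endo ϖb A ε u).1) = 0 := by
  obtain ⟨X, α⟩ := u
  obtain ⟨Y, β⟩ := v
  simp only [endo_apply, map_sub, LinearMap.sub_apply, LinearMap.smul_apply,
    LinearMap.dualMap_apply', LinearMap.comp_apply, smul_eq_mul]
  rw [flat_sq_skew hϖ hA X Y, apply_symm_eq_neg hϖ α β, hϖ X Y]
  ring

theorem endo_endo (hA : ∀ X Y : V, ϖb (A X) Y = ϖb X (A Y)) (u : V × Dual R V) :
    endo ϖb A ε (endo ϖb A ε u) = ε • u := by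
  obtain ⟨X, α⟩ := u
  refine Prod.ext ?_ ?_
  · simp only [endo_apply, map_sub, map_smul, LinearEquiv.symm_apply_apply, symm_dualMap_eq hA,
      Prod.smul_fst]
    abel
  · simp only [endo_apply, map_sub, map_smul, flat_apply_eq_dualMap hA,
      LinearEquiv.apply_symm_apply, Prod.smul_snd]
    module

end HitchinPair

theorem stmt_10_general (V : Type*) [AddCommGroup V] [Module ℝ V]
    (ϖb : V ≃ₗ[ℝ] Dual ℝ V)
    (hϖ : ∀ X Y : V, ϖb X Y = -ϖb Y X)
    (A : V →ₗ[ℝ] V)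
    (hA : ∀ X Y : V, ϖb (A X) Y = ϖb X (A Y))
    (ε : ℝ)
    (Φ : (V × Dual ℝ V) →ₗ[ℝ] (V × Dual ℝ V))
    (hΦ : ∀ (X : V) (α : Dual ℝ V),
      Φ (X, α) = (A X - ϖb.symm α, ϖb (A (A X)) - ε • ϖb X - A.dualMap α)) :
    (∀ u v, bigPairing V u (Φ v) + bigPairing V (Φ u) v = 0) ∧
    (∀ u, Φ (Φ u) = ε • u) := by
  obtain rfl : Φ = HitchinPair.endo ϖb A ε := LinearMap.ext fun u => hΦ u.1 u.2
  refine ⟨fun u v => ?_, HitchinPair.endo_endo hA⟩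
  have hskew := HitchinPair.endo_skew (ε := ε) hϖ hA u v
  simp only [bigPairing]
  linarith

/-- Given a Hitchin-type pair: a nondegenerate skew 2-form `ϖ` and a
compatible `A`, the map `Φ(X,α) = (AX + π♯α, (ϖ_{A²})♭X - εϖ♭X - α∘A)`
with `π♯ = -(ϖ♭)⁻¹` is `g`-skew-symmetric and satisfies `Φ² = εId`. -/
theorem stmt_10 (V : Type*) [AddCommGroup V] [Module ℝ V] [FiniteDimensional ℝ V]
    (ϖb : V ≃ₗ[ℝ] Dual ℝ V)
    (hϖ : ∀ X Y : V, ϖb X Y = -ϖb Y X)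
    (A : V →ₗ[ℝ] V)
    (hA : ∀ X Y : V, ϖb (A X) Y = ϖb X (A Y))
    (ε : ℝ) (hε : ε = -1 ∨ ε = 0 ∨ ε = 1)
    (Φ : (V × Dual ℝ V) →ₗ[ℝ] (V × Dual ℝ V))
    (hΦ : ∀ (X : V) (α : Dual ℝ V),
      Φ (X, α) = (A X - ϖb.symm α, ϖb (A (A X)) - ε • ϖb X - A.dualMap α)) :
    (∀ u v, bigPairing V u (Φ v) + bigPairing V (Φ u) v = 0) ∧
    (∀ u, Φ (Φ u) = ε • u) :=
  stmt_10_general V ϖb hϖ A hA ε Φ hΦ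
end

section
/- Let V be a finite-dimensional real vector space with a nondegenerate skew 2-form σ (so σ♭ : V → V* is an isomorphism), w the inverse bivector (w♯ ∘ σ♭ = -Id), A : V → V with σ(AX,Y) = σ(X,AY), and ε ∈ {-1,0,1}. Then the constraint A² = εId - π♯∘σ♭ (with π skew and compatible with A) determines π uniquely: π♯ = (A² - εId)∘w♯, and the map Φ(X,α) = (AX + (A² - εId)(w♯α), σ♭X - α∘A) satisfies Φ² = εId and is g-skew-symmetric. -/
open Module

/-!
Write `w♯` for `ws` and `T = A² - ε`. Since `σ♭` is invertible, `w♯∘σ♭ = -Id` also gives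
`σ♭∘w♯ = -Id`, so the constraint evaluated at `X = w♯α` reads `π♯α = T(w♯α)`. Compatibility of
`σ` with `A` says `A* ∘ σ♭ = σ♭ ∘ A`, hence `w♯ ∘ A* = A ∘ w♯`; together with the skewness of `w`
(inherited from that of `σ`) this makes `T ∘ w♯` skew as well. Then `Φ² = ε` is the identity
`A² + T(w♯σ♭) = ε`, and the `g`-skewness of `Φ` splits into the skewness of `σ`, of `w` and of
`A²w`.
-/

section InverseBivector

variable {R V : Type*} [CommRing R] [AddCommGroup V] [Module R V]
  (σb : V ≃ₗ[R] Dual R V) (ws : Dual R V →ₗ[R] V) (A : V →ₗ[R] V)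

theorem flat_sharp_eq_neg (hw : ∀ X, ws (σb X) = -X) (α : Dual R V) : σb (ws α) = -α := by
  obtain ⟨X, rfl⟩ := σb.surjective α
  rw [hw, map_neg]

theorem dualMap_flat_eq_flat_comp (hA : ∀ X Y, σb (A X) Y = σb X (A Y)) (X : V) :
    A.dualMap (σb X) = σb (A X) := by
  ext Y
  exact (hA X Y).symm

theorem sharp_dualMap_eq (hw : ∀ X, ws (σb X) = -X) (hA : ∀ X Y, σb (A X) Y = σb X (A Y))
    (α : Dual R V) : ws (A.dualMap α) = A (ws α) := by
  obtain ⟨X, rfl⟩ := σb.surjective α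
  rw [dualMap_flat_eq_flat_comp σb A hA, hw, hw, map_neg]

theorem sharp_skew (hσ : ∀ X Y, σb X Y = -σb Y X) (hw : ∀ X, ws (σb X) = -X)
    (α β : Dual R V) : α (ws β) = -β (ws α) := by
  obtain ⟨X, rfl⟩ := σb.surjective α
  obtain ⟨Y, rfl⟩ := σb.surjective β
  simp only [hw, map_neg, hσ X Y]

theorem sq_comp_sharp_skew (hσ : ∀ X Y, σb X Y = -σb Y X) (hw : ∀ X, ws (σb X) = -X)
    (hA : ∀ X Y, σb (A X) Y = σb X (A Y)) (α β : Dual R V) :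
    α (A (A (ws β))) = -β (A (A (ws α))) := by
  rw [← sharp_dualMap_eq σb ws A hw hA, ← sharp_dualMap_eq σb ws A hw hA, sharp_skew σb ws hσ hw]
  simp only [LinearMap.dualMap_apply]

theorem bivector_eq_of_sq_eq (hw : ∀ X, ws (σb X) = -X) (ε : R) (πs : Dual R V →ₗ[R] V)
    (hπ : ∀ X, A (A X) = ε • X - πs (σb X)) (α : Dual R V) :
    πs α = A (A (ws α)) - ε • ws α := by
  rw [hπ (ws α), flat_sharp_eq_neg σb ws hw, map_neg]
  abel

def genComplexStructure (ε : R) (u : V × Dual R V) : V × Dual R V :=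
  (A u.1 + (A (A (ws u.2)) - ε • ws u.2), σb u.1 - A.dualMap u.2)

theorem genComplexStructure_sq (hw : ∀ X, ws (σb X) = -X)
    (hA : ∀ X Y, σb (A X) Y = σb X (A Y)) (ε : R) (u : V × Dual R V) :
    genComplexStructure σb ws A ε (genComplexStructure σb ws A ε u) = ε • u := by
  obtain ⟨X, α⟩ := u
  refine Prod.ext ?_ ?_
  · show _ = ε • X
    simp only [genComplexStructure, map_add, map_sub, map_smul, map_neg, hw,
      sharp_dualMap_eq σb ws A hw hA]
    module
  · show _ = ε • α
    simp only [genComplexStructure, map_add, map_sub, map_smul, map_neg,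
      ← dualMap_flat_eq_flat_comp σb A hA, flat_sharp_eq_neg σb ws hw]
    module

end InverseBivector

theorem genComplexStructure_skew {V : Type*} [AddCommGroup V] [Module ℝ V]
    (σb : V ≃ₗ[ℝ] Dual ℝ V) (ws : Dual ℝ V →ₗ[ℝ] V) (A : V →ₗ[ℝ] V)
    (hσ : ∀ X Y, σb X Y = -σb Y X) (hw : ∀ X, ws (σb X) = -X)
    (hA : ∀ X Y, σb (A X) Y = σb X (A Y)) (ε : ℝ) (u v : V × Dual ℝ V) :
    bigPairing V u (genComplexStructure σb ws A ε v) +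
      bigPairing V (genComplexStructure σb ws A ε u) v = 0 := by
  obtain ⟨X, α⟩ := u
  obtain ⟨Y, β⟩ := v
  simp only [bigPairing, genComplexStructure, map_add, map_sub, map_smul,
    LinearMap.dualMap_apply, LinearMap.sub_apply, smul_eq_mul]
  linear_combination (hσ X Y) / 2 + (sq_comp_sharp_skew σb ws A hσ hw hA α β) / 2 -
    ε / 2 * sharp_skew σb ws hσ hw α β

theorem stmt_11_general (V : Type*) [AddCommGroup V] [Module ℝ V]
    (σb : V ≃ₗ[ℝ] Dual ℝ V)
    (hσ : ∀ X Y : V, σb X Y = -σb Y X)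
    (ws : Dual ℝ V →ₗ[ℝ] V)
    (hw : ∀ X : V, ws (σb X) = -X)
    (A : V →ₗ[ℝ] V)
    (hA : ∀ X Y : V, σb (A X) Y = σb X (A Y))
    (ε : ℝ)
    (Φ : (V × Dual ℝ V) →ₗ[ℝ] (V × Dual ℝ V))
    (hΦ : ∀ (X : V) (α : Dual ℝ V),
      Φ (X, α) = (A X + (A (A (ws α)) - ε • ws α), σb X - A.dualMap α)) :
    (∀ πs' : Dual ℝ V →ₗ[ℝ] V,
      (∀ α β : Dual ℝ V, β (πs' α) = -α (πs' β)) →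
      (∀ α β : Dual ℝ V, (A.dualMap α) (πs' β) = α (πs' (A.dualMap β))) →
      (∀ X : V, A (A X) = ε • X - πs' (σb X)) →
      ∀ α : Dual ℝ V, πs' α = A (A (ws α)) - ε • ws α) ∧
    (∀ u, Φ (Φ u) = ε • u) ∧
    (∀ u v, bigPairing V u (Φ v) + bigPairing V (Φ u) v = 0) := by
  have hΦ_eq : ⇑Φ = genComplexStructure σb ws A ε := funext fun u => hΦ u.1 u.2
  refine ⟨fun πs _ _ hπ => bivector_eq_of_sq_eq σb ws A hw ε πs hπ, ?_, ?_⟩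
  · rw [hΦ_eq]
    exact genComplexStructure_sq σb ws A hw hA ε
  · rw [hΦ_eq]
    exact genComplexStructure_skew σb ws A hσ hw hA ε

/-- For a nondegenerate skew 2-form `σ` with inverse bivector `w`
(`w♯∘σ♭ = -Id`) and a compatible `A`, the constraint `A² = εId - π♯∘σ♭`
(with `π` skew and compatible with `A`) determines `π` uniquely by
`π♯ = (A² - εId)∘w♯`, and the resulting
`Φ(X,α) = (AX + (A² - εId)(w♯α), σ♭X - α∘A)` is `g`-skew with `Φ² = εId`. -/
theorem stmt_11 (V : Type*) [AddCommGroup V] [Module ℝ V] [FiniteDimensional ℝ V]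
    (σb : V ≃ₗ[ℝ] Dual ℝ V)
    (hσ : ∀ X Y : V, σb X Y = -σb Y X)
    (ws : Dual ℝ V →ₗ[ℝ] V)
    (hw : ∀ X : V, ws (σb X) = -X)
    (A : V →ₗ[ℝ] V)
    (hA : ∀ X Y : V, σb (A X) Y = σb X (A Y))
    (ε : ℝ) (hε : ε = -1 ∨ ε = 0 ∨ ε = 1)
    (Φ : (V × Dual ℝ V) →ₗ[ℝ] (V × Dual ℝ V))
    (hΦ : ∀ (X : V) (α : Dual ℝ V),
      Φ (X, α) = (A X + (A (A (ws α)) - ε • ws α), σb X - A.dualMap α)) :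
    (∀ πs' : Dual ℝ V →ₗ[ℝ] V,
      (∀ α β : Dual ℝ V, β (πs' α) = -α (πs' β)) →
      (∀ α β : Dual ℝ V, (A.dualMap α) (πs' β) = α (πs' (A.dualMap β))) →
      (∀ X : V, A (A X) = ε • X - πs' (σb X)) →
      ∀ α : Dual ℝ V, πs' α = A (A (ws α)) - ε • ws α) ∧
    (∀ u, Φ (Φ u) = ε • u) ∧
    (∀ u v, bigPairing V u (Φ v) + bigPairing V (Φ u) v = 0) :=
  stmt_11_general V σb hσ ws hw A hA ε Φ hΦ
end

section
/- Let (V,σ) be a finite-dimensional symplectic vector space with inverse bivector w (w♯∘σ♭ = -Id), and let W be a skew bivector on V compatible with w in the sense needed below. Define B = -W♯∘σ♭ : V → V and κ♯ = -ε w♯ - W♯∘σ♭∘W♯, and set Φ_W(X,α) = (BX + κ♯α, σ♭X - α∘B). Then Φ_W is g-skew-symmetric and Φ_W² = εId. -/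
/-!
`Φ_W` is the block operator `[[B, κ♯], [σ♭, -Bᵀ]]` on `V × V*`. Skew-symmetry for `g` only needs
`σ♭` and `κ♯` to be skew, and `Φ_W² = ε` reduces to four block identities. Since `B = -W♯∘σ♭` is the
product of two skew maps, `Bᵀ = -σ♭∘W♯`, and with `σ♭∘w♯ = -Id` each identity is a short
computation; the lower-right one is the transpose of the upper-left one.
-/

open Module

section BlockOperator

variable {R V : Type*} [CommRing R] [AddCommGroup V] [Module R V]
  (B : V →ₗ[R] V) (κs : Dual R V →ₗ[R] V) (S : V →ₗ[R] Dual R V)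
  (Φ : (V × Dual R V) →ₗ[R] (V × Dual R V))

/-- Transpose of `hsq`, using the skewness of `S` and `κs`. -/
theorem apply_add_dualMap_dualMap_eq_smul (ε : R)
    (hS : ∀ X Y : V, S X Y = -S Y X) (hκ : ∀ α β : Dual R V, α (κs β) = -β (κs α))
    (hsq : ∀ X : V, B (B X) + κs (S X) = ε • X) (α : Dual R V) :
    S (κs α) + B.dualMap (B.dualMap α) = ε • α := by
  ext Y
  have h := congrArg α (hsq Y)
  simp only [map_add, map_smul, smul_eq_mul] at h
  simp only [LinearMap.add_apply, LinearMap.dualMap_apply, LinearMap.smul_apply, smul_eq_mul,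
    hS (κs α) Y, hκ (S Y) α]
  linear_combination h

theorem block_apply_apply_eq_smul (ε : R)
    (hΦ : ∀ (X : V) (α : Dual R V), Φ (X, α) = (B X + κs α, S X - B.dualMap α))
    (hsq : ∀ X : V, B (B X) + κs (S X) = ε • X)
    (hBκ : ∀ α : Dual R V, B (κs α) = κs (B.dualMap α))
    (hSB : ∀ X : V, S (B X) = B.dualMap (S X))
    (hsq' : ∀ α : Dual R V, S (κs α) + B.dualMap (B.dualMap α) = ε • α)
    (u : V × Dual R V) : Φ (Φ u) = ε • u := by
  obtain ⟨X, α⟩ := u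
  simp only [hΦ, map_add, map_sub, hBκ, hSB, Prod.smul_mk, Prod.mk.injEq]
  constructor
  · rw [← hsq X]; abel
  · rw [← hsq' α]; abel

end BlockOperator

theorem bigPairing_block_add_eq_zero {V : Type*} [AddCommGroup V] [Module ℝ V]
    (B : V →ₗ[ℝ] V) (κs : Dual ℝ V →ₗ[ℝ] V) (S : V →ₗ[ℝ] Dual ℝ V)
    (Φ : (V × Dual ℝ V) →ₗ[ℝ] (V × Dual ℝ V))
    (hS : ∀ X Y : V, S X Y = -S Y X) (hκ : ∀ α β : Dual ℝ V, α (κs β) = -β (κs α))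
    (hΦ : ∀ (X : V) (α : Dual ℝ V), Φ (X, α) = (B X + κs α, S X - B.dualMap α))
    (u v : V × Dual ℝ V) : bigPairing V u (Φ v) + bigPairing V (Φ u) v = 0 := by
  obtain ⟨X, α⟩ := u
  obtain ⟨Y, β⟩ := v
  simp only [hΦ, bigPairing, map_add, LinearMap.sub_apply, LinearMap.dualMap_apply, hκ α β, hS X Y]
  ring

section Symplectic

variable {R V : Type*} [CommRing R] [AddCommGroup V] [Module R V]
  (σb : V ≃ₗ[R] Dual R V) (ws Ws : Dual R V →ₗ[R] V) (B : V →ₗ[R] V) (κs : Dual R V →ₗ[R] V)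

theorem σb_ws_apply (hw : ∀ X : V, ws (σb X) = -X) (α : Dual R V) : σb (ws α) = -α := by
  obtain ⟨X, rfl⟩ := σb.surjective α
  rw [hw, map_neg]

theorem ws_skew (hσ : ∀ X Y : V, σb X Y = -σb Y X) (hw : ∀ X : V, ws (σb X) = -X)
    (α β : Dual R V) : α (ws β) = -β (ws α) := by
  obtain ⟨X, rfl⟩ := σb.surjective α
  obtain ⟨Y, rfl⟩ := σb.surjective β
  rw [hw, hw, map_neg, map_neg, hσ X Y]

/-- Both factors of `B = -W♯ ∘ σ♭` are skew, so transposing only reverses their order. -/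
theorem dualMap_eq_neg_σb_Ws (hσ : ∀ X Y : V, σb X Y = -σb Y X)
    (hW : ∀ α β : Dual R V, β (Ws α) = -α (Ws β)) (hB : ∀ X : V, B X = -Ws (σb X))
    (α : Dual R V) : B.dualMap α = -σb (Ws α) := by
  ext Y
  rw [LinearMap.dualMap_apply, LinearMap.neg_apply, hB, map_neg, hW (σb Y) α, hσ (Ws α) Y]

theorem κs_skew (ε : R) (hσ : ∀ X Y : V, σb X Y = -σb Y X) (hw : ∀ X : V, ws (σb X) = -X)
    (hW : ∀ α β : Dual R V, β (Ws α) = -α (Ws β))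
    (hκ : ∀ α : Dual R V, κs α = -(ε • ws α) - Ws (σb (Ws α))) (α β : Dual R V) :
    α (κs β) = -β (κs α) := by
  simp only [hκ, map_sub, map_neg, map_smul, smul_eq_mul]
  rw [ws_skew σb ws hσ hw α β, hW (σb (Ws β)) α, hσ (Ws β) (Ws α), hW (σb (Ws α)) β]
  ring

theorem sq_add_κs_σb (ε : R) (hw : ∀ X : V, ws (σb X) = -X) (hB : ∀ X : V, B X = -Ws (σb X))
    (hκ : ∀ α : Dual R V, κs α = -(ε • ws α) - Ws (σb (Ws α))) (X : V) :
    B (B X) + κs (σb X) = ε • X := by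
  rw [hB (B X), hB X, hκ, hw, map_neg, map_neg, smul_neg]
  abel

theorem B_κs_eq_κs_dualMap (ε : R) (hσ : ∀ X Y : V, σb X Y = -σb Y X)
    (hw : ∀ X : V, ws (σb X) = -X) (hW : ∀ α β : Dual R V, β (Ws α) = -α (Ws β))
    (hB : ∀ X : V, B X = -Ws (σb X))
    (hκ : ∀ α : Dual R V, κs α = -(ε • ws α) - Ws (σb (Ws α))) (α : Dual R V) :
    B (κs α) = κs (B.dualMap α) := by
  rw [dualMap_eq_neg_σb_Ws σb Ws B hσ hW hB, hB, hκ, hκ]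
  simp only [map_sub, map_neg, map_smul, σb_ws_apply σb ws hw, hw, neg_neg, smul_neg]
  abel

theorem σb_B_eq_dualMap_σb (hσ : ∀ X Y : V, σb X Y = -σb Y X)
    (hW : ∀ α β : Dual R V, β (Ws α) = -α (Ws β)) (hB : ∀ X : V, B X = -Ws (σb X)) (X : V) :
    σb (B X) = B.dualMap (σb X) := by
  rw [dualMap_eq_neg_σb_Ws σb Ws B hσ hW hB, hB, map_neg]

end Symplectic

theorem stmt_12_general (V : Type*) [AddCommGroup V] [Module ℝ V]
    (σb : V ≃ₗ[ℝ] Dual ℝ V)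
    (hσ : ∀ X Y : V, σb X Y = -σb Y X)
    (ws : Dual ℝ V →ₗ[ℝ] V)
    (hw : ∀ X : V, ws (σb X) = -X)
    (Ws : Dual ℝ V →ₗ[ℝ] V)
    (hW : ∀ α β : Dual ℝ V, β (Ws α) = -α (Ws β))
    (ε : ℝ)
    (B : V →ₗ[ℝ] V)
    (hB : ∀ X : V, B X = -Ws (σb X))
    (κs : Dual ℝ V →ₗ[ℝ] V)
    (hκ : ∀ α : Dual ℝ V, κs α = -(ε • ws α) - Ws (σb (Ws α)))
    (ΦW : (V × Dual ℝ V) →ₗ[ℝ] (V × Dual ℝ V))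
    (hΦ : ∀ (X : V) (α : Dual ℝ V),
      ΦW (X, α) = (B X + κs α, σb X - B.dualMap α)) :
    (∀ u v, bigPairing V u (ΦW v) + bigPairing V (ΦW u) v = 0) ∧
    (∀ u, ΦW (ΦW u) = ε • u) := by
  have hκ_skew := κs_skew σb ws Ws κs ε hσ hw hW hκ
  have hsq := sq_add_κs_σb σb ws Ws B κs ε hw hB hκ
  refine ⟨bigPairing_block_add_eq_zero B κs σb ΦW hσ hκ_skew hΦ, ?_⟩
  exact block_apply_apply_eq_smul B κs σb ΦW ε hΦ hsq
    (B_κs_eq_κs_dualMap σb ws Ws B κs ε hσ hw hW hB hκ)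
    (σb_B_eq_dualMap_σb σb Ws B hσ hW hB)
    (apply_add_dualMap_dualMap_eq_smul B κs σb ε hσ hκ_skew hsq)

/-- On a symplectic vector space `(V,σ)` with inverse bivector `w`
(`w♯∘σ♭ = -Id`) and a skew bivector `W`, the map
`Φ_W(X,α) = (BX + κ♯α, σ♭X - α∘B)` with `B = -W♯∘σ♭` and
`κ♯ = -εw♯ - W♯∘σ♭∘W♯` is `g`-skew-symmetric and satisfies `Φ_W² = εId`. -/
theorem stmt_12 (V : Type*) [AddCommGroup V] [Module ℝ V] [FiniteDimensional ℝ V]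
    (σb : V ≃ₗ[ℝ] Dual ℝ V)
    (hσ : ∀ X Y : V, σb X Y = -σb Y X)
    (ws : Dual ℝ V →ₗ[ℝ] V)
    (hw : ∀ X : V, ws (σb X) = -X)
    (Ws : Dual ℝ V →ₗ[ℝ] V)
    (hW : ∀ α β : Dual ℝ V, β (Ws α) = -α (Ws β))
    (ε : ℝ) (hε : ε = -1 ∨ ε = 0 ∨ ε = 1)
    (B : V →ₗ[ℝ] V)
    (hB : ∀ X : V, B X = -Ws (σb X))
    (κs : Dual ℝ V →ₗ[ℝ] V)
    (hκ : ∀ α : Dual ℝ V, κs α = -(ε • ws α) - Ws (σb (Ws α)))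
    (ΦW : (V × Dual ℝ V) →ₗ[ℝ] (V × Dual ℝ V))
    (hΦ : ∀ (X : V) (α : Dual ℝ V),
      ΦW (X, α) = (B X + κs α, σb X - B.dualMap α)) :
    (∀ u v, bigPairing V u (ΦW v) + bigPairing V (ΦW u) v = 0) ∧
    (∀ u, ΦW (ΦW u) = ε • u) :=
  stmt_12_general V σb hσ ws hw Ws hW ε B hB κs hκ ΦW hΦ
end

section
/- Let V be a finite-dimensional real vector space, Φ a g-skew-symmetric endomorphism of V ⊕ V* with Φ² = εId and components (A, π, σ), and suppose the bivector π is zero. If ε = ±1 and the skew 2-form B is defined by B(X,Y) = (ε/2)σ(AX,Y), then σ(X,Y) = B(AX,Y) + B(X,AY) for all X,Y ∈ V; consequently the gauge transform of Φ by B has vanishing 2-form component, i.e. Φ is gauge equivalent to the classical structure (X,α) ↦ (AX, -α∘A). -/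
/-!
By the compatibility of `σ` with `A` and `A² = ε`, both `B(AX,Y)` and `B(X,AY)` equal
`(ε²/2) σ(X,Y)`, so they sum to `σ(X,Y)` because `ε² = 1`. Conjugating `Φ` by the gauge
transformation of `B` replaces `σ` by `σ - B(A·,·) - B(·,A·)`, which therefore vanishes.
-/

open Module

section GaugeTransform

variable {R V : Type*} [CommRing R] [AddCommGroup V] [Module R V]

theorem gauge_conj_apply (A : V →ₗ[R] V) (σb Bb : V →ₗ[R] Dual R V)
    (Φ G Ginv : (V × Dual R V) →ₗ[R] (V × Dual R V))
    (hΦ : ∀ (X : V) (α : Dual R V), Φ (X, α) = (A X, σb X - A.dualMap α))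
    (hG : ∀ (X : V) (α : Dual R V), G (X, α) = (X, α + Bb X))
    (hGinv : ∀ (X : V) (α : Dual R V), Ginv (X, α) = (X, α - Bb X))
    (X : V) (α : Dual R V) :
    Ginv (Φ (G (X, α))) = (A X, (σb X - Bb (A X) - A.dualMap (Bb X)) - A.dualMap α) := by
  rw [hG, hΦ, hGinv, map_add]
  congr 1
  abel

theorem gauge_two_form_eq_zero (A : V →ₗ[R] V) (σb Bb : V →ₗ[R] Dual R V)
    (hσB : ∀ X Y : V, σb X Y = Bb (A X) Y + Bb X (A Y)) (X : V) :
    σb X - Bb (A X) - A.dualMap (Bb X) = 0 := by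
  ext Y
  simp only [LinearMap.sub_apply, LinearMap.dualMap_apply', LinearMap.comp_apply,
    LinearMap.zero_apply, hσB]
  ring

end GaugeTransform

theorem eq_gauge_of_compat_of_sq_eq_smul {K V : Type*} [Field K] [NeZero (2 : K)]
    [AddCommGroup V] [Module K V] (A : V →ₗ[K] V) (σb Bb : V →ₗ[K] Dual K V)
    (hcompat : ∀ X Y : V, σb (A X) Y = σb X (A Y))
    {ε : K} (hεε : ε * ε = 1) (hA2 : ∀ X : V, A (A X) = ε • X)
    (hBb : ∀ X : V, Bb X = (ε / 2) • σb (A X)) (X Y : V) :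
    σb X Y = Bb (A X) Y + Bb X (A Y) := by
  have hAAX : σb (A (A X)) Y = ε * σb X Y := by rw [hA2, map_smul, LinearMap.smul_apply, smul_eq_mul]
  have hAY : σb (A X) (A Y) = ε * σb X Y := by rw [hcompat, hA2, map_smul, smul_eq_mul]
  simp only [hBb, LinearMap.smul_apply, smul_eq_mul, hAAX, hAY]
  field_simp
  linear_combination (-2 * σb X Y) * hεε

theorem stmt_13_general (V : Type*) [AddCommGroup V] [Module ℝ V]
    (A : V →ₗ[ℝ] V) (σb : V →ₗ[ℝ] Dual ℝ V)
    (hcompat : ∀ X Y : V, σb (A X) Y = σb X (A Y))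
    (ε : ℝ) (hε : ε = -1 ∨ ε = 1)
    (hA2 : ∀ X : V, A (A X) = ε • X)
    (Φ : (V × Dual ℝ V) →ₗ[ℝ] (V × Dual ℝ V))
    (hΦ : ∀ (X : V) (α : Dual ℝ V), Φ (X, α) = (A X, σb X - A.dualMap α))
    (Bb : V →ₗ[ℝ] Dual ℝ V)
    (hBb : ∀ X : V, Bb X = (ε / 2) • σb (A X))
    (G Ginv : (V × Dual ℝ V) →ₗ[ℝ] (V × Dual ℝ V))
    (hG : ∀ (X : V) (α : Dual ℝ V), G (X, α) = (X, α + Bb X))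
    (hGinv : ∀ (X : V) (α : Dual ℝ V), Ginv (X, α) = (X, α - Bb X)) :
    (∀ X Y : V, σb X Y = Bb (A X) Y + Bb X (A Y)) ∧
    (∀ (X : V) (α : Dual ℝ V), Ginv (Φ (G (X, α))) = (A X, -A.dualMap α)) := by
  have hεε : ε * ε = 1 := mul_self_eq_one_iff.mpr hε.symm
  have hσB := eq_gauge_of_compat_of_sq_eq_smul A σb Bb hcompat hεε hA2 hBb
  refine ⟨hσB, fun X α => ?_⟩
  rw [gauge_conj_apply A σb Bb Φ G Ginv hΦ hG hGinv, gauge_two_form_eq_zero A σb Bb hσB,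
    zero_sub]

/-- If `Φ` has components `(A, 0, σ)` (vanishing bivector), `Φ² = εId` with
`ε = ±1`, and `B(X,Y) = (ε/2)σ(AX,Y)`, then `σ(X,Y) = B(AX,Y) + B(X,AY)`;
consequently the gauge transform of `Φ` by `B` is the classical structure
`(X,α) ↦ (AX, -α∘A)`. -/
theorem stmt_13 (V : Type*) [AddCommGroup V] [Module ℝ V] [FiniteDimensional ℝ V]
    (A : V →ₗ[ℝ] V) (σb : V →ₗ[ℝ] Dual ℝ V)
    (hσ : ∀ X Y : V, σb X Y = -σb Y X)
    (hcompat : ∀ X Y : V, σb (A X) Y = σb X (A Y))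
    (ε : ℝ) (hε : ε = -1 ∨ ε = 1)
    (hA2 : ∀ X : V, A (A X) = ε • X)
    (Φ : (V × Dual ℝ V) →ₗ[ℝ] (V × Dual ℝ V))
    (hΦ : ∀ (X : V) (α : Dual ℝ V), Φ (X, α) = (A X, σb X - A.dualMap α))
    (Bb : V →ₗ[ℝ] Dual ℝ V)
    (hBb : ∀ X : V, Bb X = (ε / 2) • σb (A X))
    (G Ginv : (V × Dual ℝ V) →ₗ[ℝ] (V × Dual ℝ V))
    (hG : ∀ (X : V) (α : Dual ℝ V), G (X, α) = (X, α + Bb X))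
    (hGinv : ∀ (X : V) (α : Dual ℝ V), Ginv (X, α) = (X, α - Bb X)) :
    (∀ X Y : V, σb X Y = Bb (A X) Y + Bb X (A Y)) ∧
    (∀ (X : V) (α : Dual ℝ V), Ginv (Φ (G (X, α))) = (A X, -A.dualMap α)) :=
  stmt_13_general V A σb hcompat ε hε hA2 Φ hΦ Bb hBb G Ginv hG hGinv
end

section
/- Let V be a finite-dimensional real vector space, Φ a g-skew-symmetric endomorphism of V ⊕ V* with components (A,π,σ) and Φ² = εId, and let N ⊆ V be a subspace satisfying the quasi-invariance conditions: (i) N ∩ π♯(ann N) = 0 (Poisson-Dirac) and (ii) A(N) ⊆ N ⊕ π♯(ann N). If γ ∈ ann N ∩ ker π♯, then γ∘A ∈ ann N. -/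
open Module

/- A covector in `ker π♯` kills the whole image of the skew map `π♯`, and `γ ∈ ann N` kills `N`,
so `γ` kills `N ⊔ π♯(ann N)`, which contains `A(N)`. -/

section Skew

variable {R V : Type*} [CommRing R] [AddCommGroup V] [Module R V] {πs : Dual R V →ₗ[R] V}
  {γ : Dual R V}

theorem apply_eq_zero_of_skew_of_mem_ker (hπ : ∀ α β : Dual R V, β (πs α) = -α (πs β))
    (hγ : πs γ = 0) (α : Dual R V) : γ (πs α) = 0 := by
  rw [hπ, hγ, map_zero, neg_zero]

theorem mem_dualAnnihilator_range_of_skew_of_mem_ker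
    (hπ : ∀ α β : Dual R V, β (πs α) = -α (πs β)) (hγ : πs γ = 0) :
    γ ∈ (LinearMap.range πs).dualAnnihilator := by
  rw [Submodule.mem_dualAnnihilator]
  rintro _ ⟨α, rfl⟩
  exact apply_eq_zero_of_skew_of_mem_ker hπ hγ α

end Skew

theorem stmt_17_general (V : Type*) [AddCommGroup V] [Module ℝ V]
    (A : V →ₗ[ℝ] V) (πs : Dual ℝ V →ₗ[ℝ] V)
    (hπ : ∀ α β : Dual ℝ V, β (πs α) = -α (πs β))
    (N : Submodule ℝ V)
    (hAN : ∀ X ∈ N, A X ∈ N ⊔ N.dualAnnihilator.map πs) :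
    ∀ γ ∈ N.dualAnnihilator ⊓ LinearMap.ker πs,
      A.dualMap γ ∈ N.dualAnnihilator := by
  rintro γ ⟨hγN, hγπ⟩
  have hγ : γ ∈ (N ⊔ N.dualAnnihilator.map πs).dualAnnihilator := by
    rw [Submodule.dualAnnihilator_sup_eq]
    exact ⟨hγN, Submodule.dualAnnihilator_anti LinearMap.map_le_range
      (mem_dualAnnihilator_range_of_skew_of_mem_ker hπ hγπ)⟩
  rw [Submodule.mem_dualAnnihilator] at hγ ⊢
  exact fun X hX => hγ (A X) (hAN X hX)

/-- For `Φ` with components `(A,π,σ)`, `Φ² = εId`, and a quasi-invariant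
subspace `N` (`N ∩ π♯(ann N) = 0` and `A(N) ⊆ N ⊕ π♯(ann N)`), every
`γ ∈ ann N ∩ ker π♯` satisfies `γ∘A ∈ ann N`. -/
theorem stmt_17 (V : Type*) [AddCommGroup V] [Module ℝ V] [FiniteDimensional ℝ V]
    (A : V →ₗ[ℝ] V) (πs : Dual ℝ V →ₗ[ℝ] V) (σb : V →ₗ[ℝ] Dual ℝ V)
    (hπ : ∀ α β : Dual ℝ V, β (πs α) = -α (πs β))
    (hσ : ∀ X Y : V, σb X Y = -σb Y X)
    (ε : ℝ)
    (hA2 : ∀ X : V, A (A X) = ε • X - πs (σb X))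
    (hcπ : ∀ α β : Dual ℝ V, (A.dualMap α) (πs β) = α (πs (A.dualMap β)))
    (hcσ : ∀ X Y : V, σb (A X) Y = σb X (A Y))
    (N : Submodule ℝ V)
    (hPD : N ⊓ N.dualAnnihilator.map πs = ⊥)
    (hAN : ∀ X ∈ N, A X ∈ N ⊔ N.dualAnnihilator.map πs) :
    ∀ γ ∈ N.dualAnnihilator ⊓ LinearMap.ker πs,
      A.dualMap γ ∈ N.dualAnnihilator :=
  stmt_17_general V A πs hπ N hAN
end

section
/- Let V be a finite-dimensional real vector space, Φ a g-skew-symmetric endomorphism of V ⊕ V* with components (A,π,σ) and Φ² = εId. Let N ⊆ V be a quasi-invariant subspace: N ∩ π♯(ann N) = 0 and A(N) ⊆ N ⊕ π♯(ann N). Define on N the induced data: A'X = pr_N(AX) (projection along π♯(ann N)), the induced bivector π' on N (determined by the Poisson-Dirac condition), and σ'(X,Y) = σ(X,Y) - π(α_X, α_Y) where AX = A'X + π♯α_X with α_X ∈ ann N (chosen modulo ann N ∩ ker π♯). Then σ' is a well-defined skew 2-form on N: its value does not depend on the choice of representatives α_X, α_Y, and σ'(X,Y) = -σ'(Y,X).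 -/
/-!
Two choices of `α_X` differ by an element of `ann N` whose image under `π♯` lies in `N`, because
`A X - π♯ α_X` and `A X - π♯ α_X'` both do; since `N ∩ π♯(ann N) = 0`, the vector `π♯ α_X` does not
depend on the choice. The skew pairing `π(α, β) = β(π♯ α)` only sees `π♯ α` and `π♯ β`, so
`π(α_X, α_Y)` is well defined, and skewness of `σ'` is inherited from that of `σ` and `π`.
-/

open Module

theorem Submodule.eq_of_sub_mem_of_disjoint {R M : Type*} [Ring R] [AddCommGroup M] [Module R M]
    {N W : Submodule R M} (hNW : Disjoint N W) {v w w' : M} (hw : w ∈ W) (hw' : w' ∈ W)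
    (hv : v - w ∈ N) (hv' : v - w' ∈ N) : w = w' := by
  have hN : w - w' ∈ N := by simpa using N.sub_mem hv' hv
  exact sub_eq_zero.mp (Submodule.disjoint_def.mp hNW _ hN (W.sub_mem hw hw'))

theorem apply_eq_apply_of_skew {R M : Type*} [CommRing R] [AddCommGroup M] [Module R M]
    (πs : Dual R M →ₗ[R] M) (hπ : ∀ α β : Dual R M, β (πs α) = -α (πs β))
    {α α' β β' : Dual R M} (hα : πs α = πs α') (hβ : πs β = πs β') :
    β (πs α) = β' (πs α') := by
  rw [hπ α β, hβ, hπ β' α, neg_neg, hα]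

theorem stmt_18_general (V : Type*) [AddCommGroup V] [Module ℝ V]
    (A : V →ₗ[ℝ] V) (πs : Dual ℝ V →ₗ[ℝ] V) (σb : V →ₗ[ℝ] Dual ℝ V)
    (hπ : ∀ α β : Dual ℝ V, β (πs α) = -α (πs β))
    (hσ : ∀ X Y : V, σb X Y = -σb Y X)
    (N : Submodule ℝ V)
    (hPD : N ⊓ N.dualAnnihilator.map πs = ⊥) :
    ∀ X ∈ N, ∀ Y ∈ N,
      ∀ αX ∈ N.dualAnnihilator, ∀ αX' ∈ N.dualAnnihilator,
      ∀ αY ∈ N.dualAnnihilator, ∀ αY' ∈ N.dualAnnihilator,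
      A X - πs αX ∈ N → A X - πs αX' ∈ N →
      A Y - πs αY ∈ N → A Y - πs αY' ∈ N →
      (αY (πs αX) = αY' (πs αX')) ∧
      (σb X Y - αY (πs αX) = -(σb Y X - αX (πs αY))) := by
  intro X _ Y _ αX hαX αX' hαX' αY hαY αY' hαY' hX hX' hY hY'
  have hdisj : Disjoint N (N.dualAnnihilator.map πs) := disjoint_iff.mpr hPD
  have hπX : πs αX = πs αX' :=
    Submodule.eq_of_sub_mem_of_disjoint hdisj (Submodule.mem_map_of_mem hαX)
      (Submodule.mem_map_of_mem hαX') hX hX'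
  have hπY : πs αY = πs αY' :=
    Submodule.eq_of_sub_mem_of_disjoint hdisj (Submodule.mem_map_of_mem hαY)
      (Submodule.mem_map_of_mem hαY') hY hY'
  refine ⟨apply_eq_apply_of_skew πs hπ hπX hπY, ?_⟩
  rw [hσ X Y, hπ αX αY]
  ring

/-- For `Φ` with components `(A,π,σ)`, `Φ² = εId`, and a quasi-invariant
subspace `N`, the induced 2-form `σ'(X,Y) = σ(X,Y) - π(α_X,α_Y)` (where
`AX = pr_N(AX) + π♯α_X` with `α_X ∈ ann N`) is well defined (independent of
the choice of `α_X`, `α_Y`) and skew-symmetric. -/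
theorem stmt_18 (V : Type*) [AddCommGroup V] [Module ℝ V] [FiniteDimensional ℝ V]
    (A : V →ₗ[ℝ] V) (πs : Dual ℝ V →ₗ[ℝ] V) (σb : V →ₗ[ℝ] Dual ℝ V)
    (hπ : ∀ α β : Dual ℝ V, β (πs α) = -α (πs β))
    (hσ : ∀ X Y : V, σb X Y = -σb Y X)
    (ε : ℝ)
    (hA2 : ∀ X : V, A (A X) = ε • X - πs (σb X))
    (hcπ : ∀ α β : Dual ℝ V, (A.dualMap α) (πs β) = α (πs (A.dualMap β)))
    (hcσ : ∀ X Y : V, σb (A X) Y = σb X (A Y))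
    (N : Submodule ℝ V)
    (hPD : N ⊓ N.dualAnnihilator.map πs = ⊥)
    (hAN : ∀ X ∈ N, A X ∈ N ⊔ N.dualAnnihilator.map πs) :
    ∀ X ∈ N, ∀ Y ∈ N,
      ∀ αX ∈ N.dualAnnihilator, ∀ αX' ∈ N.dualAnnihilator,
      ∀ αY ∈ N.dualAnnihilator, ∀ αY' ∈ N.dualAnnihilator,
      A X - πs αX ∈ N → A X - πs αX' ∈ N →
      A Y - πs αY ∈ N → A Y - πs αY' ∈ N →
      (αY (πs αX) = αY' (πs αX')) ∧
      (σb X Y - αY (πs αX) = -(σb Y X - αX (πs αY))) :=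
  stmt_18_general V A πs σb hπ hσ N hPD
end

section
/- Let V be a finite-dimensional real vector space and Φ a g-skew-symmetric endomorphism of V ⊕ V* with Φ² = -Id. Let N ⊆ V be a quasi-invariant subspace (N ∩ π♯(ann N) = 0 and A(N) ⊆ N ⊕ π♯(ann N), where (A,π,σ) are the components of Φ). Let L ⊆ (V ⊕ V*) ⊗ ℂ be the i-eigenspace of Φ and define the pullback ι*L = {(X, ξ|_N) : X ∈ N ⊗ ℂ, ξ ∈ V* ⊗ ℂ, (X,ξ) ∈ L} ⊆ (N ⊕ N*) ⊗ ℂ. Then ι*L ∩ conj(ι*L) = 0. -/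
open Module

/-!
Write `(X₁ + iX₂, ξ₁ + iξ₂)` for the element of `ι*L ∩ conj(ι*L)` and `ζ₁, ζ₂` for the
covectors witnessing that its conjugate lies in `ι*L`. Comparing vector parts of the eigenvalue
equations gives `π(ζ₁ - ξ₁) = 2X₂` and `π(ζ₂ + ξ₂) = 2X₁` with `ζ₁ - ξ₁, ζ₂ + ξ₂ ∈ ann N`, so
`X₁ = X₂ = 0` by `N ∩ π(ann N) = 0`. The covectors are then in `ker π`, and quasi-invariance
makes `A*` preserve `ker π ∩ ann N`, because a covector in `ker π` kills `π(ann N)` by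
skew-symmetry of `π`. Applying this to `ζ₂ + ξ₂` and to `ξ₁` shows that `ξ₁` and `ξ₂` vanish
on `N`.
-/

namespace Submodule

theorem subtype_dualMap_eq_zero_iff {K M : Type*} [CommSemiring K] [AddCommMonoid M] [Module K M]
    (N : Submodule K M) {η : Dual K M} : N.subtype.dualMap η = 0 ↔ η ∈ N.dualAnnihilator := by
  rw [← LinearMap.mem_ker, LinearMap.ker_dualMap_eq_dualAnnihilator_range, range_subtype]

theorem mem_of_add_self_mem {K M : Type*} [CommRing K] [Invertible (2 : K)] [AddCommGroup M]
    [Module K M] {p : Submodule K M} {x : M} (h : x + x ∈ p) : x ∈ p := by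
  rwa [← two_smul K x, smul_mem_iff''] at h

end Submodule

section QuasiInvariant

variable {K V : Type*} [CommRing K] [AddCommGroup V] [Module K V]
  {A : V →ₗ[K] V} {π : Dual K V →ₗ[K] V} {N : Submodule K V}

theorem apply_map_eq_zero_of_map_eq_zero (hπ : ∀ α β : Dual K V, β (π α) = -α (π β))
    {η : Dual K V} (hη : π η = 0) (α : Dual K V) : η (π α) = 0 := by
  rw [hπ, hη, map_zero, neg_zero]

theorem dualMap_mem_dualAnnihilator (hπ : ∀ α β : Dual K V, β (π α) = -α (π β))
    (hAN : ∀ X ∈ N, A X ∈ N ⊔ N.dualAnnihilator.map π) {η : Dual K V}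
    (hηN : η ∈ N.dualAnnihilator) (hη : π η = 0) : A.dualMap η ∈ N.dualAnnihilator := by
  rw [Submodule.mem_dualAnnihilator] at hηN ⊢
  intro Y hY
  obtain ⟨m, hm, _, ⟨α, -, rfl⟩, hAY⟩ := Submodule.mem_sup.mp (hAN Y hY)
  rw [LinearMap.dualMap_apply, ← hAY, map_add, hηN m hm,
    apply_map_eq_zero_of_map_eq_zero hπ hη, add_zero]

theorem eq_zero_of_mem_of_add_self_eq_map [Invertible (2 : K)]
    (hPD : N ⊓ N.dualAnnihilator.map π = ⊥) {x : V} (hx : x ∈ N) {α : Dual K V}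
    (hα : α ∈ N.dualAnnihilator) (h : π α = x + x) : x = 0 := by
  have hmap : x ∈ N.dualAnnihilator.map π :=
    Submodule.mem_of_add_self_mem (h ▸ Submodule.mem_map_of_mem hα)
  simpa [hPD] using Submodule.mem_inf.mpr ⟨hx, hmap⟩

end QuasiInvariant

/-- The complexification is modelled by real and imaginary parts: `u + iv` is the pair `(u,v)`,
so `((X₁,ξ₁),(X₂,ξ₂)) ∈ L` iff `Φ(X₁,ξ₁) = -(X₂,ξ₂)` and `Φ(X₂,ξ₂) = (X₁,ξ₁)`, and conjugation
is `(u,v) ↦ (u,-v)`. -/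
theorem stmt_19_general (V : Type*) [AddCommGroup V] [Module ℝ V]
    (A : V →ₗ[ℝ] V) (πs : Dual ℝ V →ₗ[ℝ] V) (σb : V →ₗ[ℝ] Dual ℝ V)
    (hπ : ∀ α β : Dual ℝ V, β (πs α) = -α (πs β))
    (Φ : (V × Dual ℝ V) →ₗ[ℝ] (V × Dual ℝ V))
    (hΦ : ∀ (X : V) (α : Dual ℝ V),
      Φ (X, α) = (A X + πs α, σb X - A.dualMap α))
    (N : Submodule ℝ V)
    (hPD : N ⊓ N.dualAnnihilator.map πs = ⊥)
    (hAN : ∀ X ∈ N, A X ∈ N ⊔ N.dualAnnihilator.map πs)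
    -- an element of `ι*L`, with vector parts in `N`:
    (X₁ X₂ : N) (ξ₁ ξ₂ : Dual ℝ V)
    (h₁ : Φ ((X₁ : V), ξ₁) = (-(X₂ : V), -ξ₂))
    (h₂ : Φ ((X₂ : V), ξ₂) = ((X₁ : V), ξ₁))
    -- whose conjugate `((X₁, ξ₁|N), (-X₂, -ξ₂|N))` also lies in `ι*L`,
    -- via representatives `ζ₁, ζ₂` of the restricted covectors:
    (ζ₁ ζ₂ : Dual ℝ V)
    (h₃ : N.subtype.dualMap ζ₁ = N.subtype.dualMap ξ₁)
    (h₄ : N.subtype.dualMap ζ₂ = -N.subtype.dualMap ξ₂)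
    (h₅ : Φ ((X₁ : V), ζ₁) = ((X₂ : V), -ζ₂))
    (h₆ : Φ (-(X₂ : V), ζ₂) = ((X₁ : V), ζ₁)) :
    X₁ = 0 ∧ X₂ = 0 ∧ N.subtype.dualMap ξ₁ = 0 ∧ N.subtype.dualMap ξ₂ = 0 := by
  simp only [hΦ, Prod.mk.injEq, map_neg] at h₁ h₂ h₅ h₆
  obtain ⟨e₁, e₁'⟩ := h₁
  obtain ⟨e₂, e₂'⟩ := h₂
  obtain ⟨e₅, -⟩ := h₅
  obtain ⟨e₆, e₆'⟩ := h₆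
  have hann₁ : ζ₁ - ξ₁ ∈ N.dualAnnihilator := by
    rw [← N.subtype_dualMap_eq_zero_iff, map_sub, h₃, sub_self]
  have hann₂ : ζ₂ + ξ₂ ∈ N.dualAnnihilator := by
    rw [← N.subtype_dualMap_eq_zero_iff, map_add, h₄, neg_add_cancel]
  have hX₂ : (X₂ : V) = 0 := eq_zero_of_mem_of_add_self_eq_map hPD X₂.2 hann₁ (by
    rw [map_sub]; linear_combination (norm := abel) e₅ - e₁)
  have hX₁ : (X₁ : V) = 0 := eq_zero_of_mem_of_add_self_eq_map hPD X₁.2 hann₂ (by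
    rw [map_add]; linear_combination (norm := abel) e₆ + e₂)
  simp only [hX₁, hX₂, map_zero, neg_zero, zero_add, zero_sub, neg_inj] at e₁ e₁' e₂ e₂' e₆ e₆'
  have hξ₁ : ξ₁ ∈ N.dualAnnihilator := by
    have hA := dualMap_mem_dualAnnihilator hπ hAN hann₂ (by rw [map_add, e₆, e₂, add_zero])
    refine Submodule.mem_of_add_self_mem ?_
    have hsum : ξ₁ + ξ₁ = -A.dualMap (ζ₂ + ξ₂) - (ζ₁ - ξ₁) := by
      rw [map_add, neg_add, e₆', e₂']; abel
    rw [hsum]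
    exact sub_mem (neg_mem hA) hann₁
  have hξ₂ : ξ₂ ∈ N.dualAnnihilator := e₁' ▸ dualMap_mem_dualAnnihilator hπ hAN hξ₁ e₁
  simp only [Submodule.subtype_dualMap_eq_zero_iff]
  exact ⟨Subtype.ext hX₁, Subtype.ext hX₂, hξ₁, hξ₂⟩

/-- Key algebraic step of Theorem 3.1: for a generalized complex structure
`Φ` with components `(A,π,σ)` (`Φ² = -Id`) and a quasi-invariant subspace
`N`, the pullback `ι*L` of the `i`-eigenspace `L` of `Φ` to `(N ⊕ N*) ⊗ ℂ`
meets its complex conjugate only in `0`.  The complexification is modelled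
concretely by real and imaginary parts: an element `u + iv` of
`(V ⊕ V*) ⊗ ℂ` is the pair `(u,v)`, `i•(u,v) = (-v,u)`, and conjugation is
`(u,v) ↦ (u,-v)`; thus `((X₁,ξ₁),(X₂,ξ₂)) ∈ L` iff `Φ(X₁,ξ₁) = -(X₂,ξ₂)`
and `Φ(X₂,ξ₂) = (X₁,ξ₁)`.  An element of `ι*L ∩ conj(ι*L)` is represented
by the data below, and the conclusion says it vanishes. -/
theorem stmt_19 (V : Type*) [AddCommGroup V] [Module ℝ V] [FiniteDimensional ℝ V]
    (A : V →ₗ[ℝ] V) (πs : Dual ℝ V →ₗ[ℝ] V) (σb : V →ₗ[ℝ] Dual ℝ V)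
    (hπ : ∀ α β : Dual ℝ V, β (πs α) = -α (πs β))
    (hσ : ∀ X Y : V, σb X Y = -σb Y X)
    (Φ : (V × Dual ℝ V) →ₗ[ℝ] (V × Dual ℝ V))
    (hΦ : ∀ (X : V) (α : Dual ℝ V),
      Φ (X, α) = (A X + πs α, σb X - A.dualMap α))
    (hsq : ∀ u, Φ (Φ u) = -u)
    (N : Submodule ℝ V)
    (hPD : N ⊓ N.dualAnnihilator.map πs = ⊥)
    (hAN : ∀ X ∈ N, A X ∈ N ⊔ N.dualAnnihilator.map πs)
    -- an element of `ι*L`, with vector parts in `N`: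
    (X₁ X₂ : N) (ξ₁ ξ₂ : Dual ℝ V)
    (h₁ : Φ ((X₁ : V), ξ₁) = (-(X₂ : V), -ξ₂))
    (h₂ : Φ ((X₂ : V), ξ₂) = ((X₁ : V), ξ₁))
    -- whose conjugate `((X₁, ξ₁|N), (-X₂, -ξ₂|N))` also lies in `ι*L`,
    -- via representatives `ζ₁, ζ₂` of the restricted covectors:
    (ζ₁ ζ₂ : Dual ℝ V)
    (h₃ : N.subtype.dualMap ζ₁ = N.subtype.dualMap ξ₁)
    (h₄ : N.subtype.dualMap ζ₂ = -N.subtype.dualMap ξ₂)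
    (h₅ : Φ ((X₁ : V), ζ₁) = ((X₂ : V), -ζ₂))
    (h₆ : Φ (-(X₂ : V), ζ₂) = ((X₁ : V), ζ₁)) :
    X₁ = 0 ∧ X₂ = 0 ∧ N.subtype.dualMap ξ₁ = 0 ∧ N.subtype.dualMap ξ₂ = 0 :=
  stmt_19_general V A πs σb hπ Φ hΦ N hPD hAN X₁ X₂ ξ₁ ξ₂ h₁ h₂ ζ₁ ζ₂ h₃ h₄ h₅ h₆
end
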